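/- Let f be differentiable with L-Lipschitz gradient, g : ℝ^n → ℝ convex, and suppose 0 < s ≤ α ≤ 1/L with sL < 1. With y = prox_{sg}(x - s∇f(x)) and x⁺ = prox_{αg}(x - α∇f(y)), one has F(x) - F(x⁺) ≥ (1/(2α))‖x - x⁺‖², where F = f + g. -/

import Mathlib

/-!
Both prox points satisfy the variational inequality of a proximal step: `y` tested against `x`
and `x⁺` tested against `y` bound the decrease of `g` below by inner products with `∇f x` and
`∇f y`. The descent lemma bounds the increase of `f` along `x → y → x⁺` by the same inner
products plus `L/2` times the squared step lengths. Adding the four inequalities, the gradient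
terms cancel, and what is left dominates `‖x - x⁺‖² / (2α)` because `1/α ≤ 1/s` and `L ≤ 1/α`.
-/

open scoped RealInnerProductSpace
open Set Filter Topology

theorem nonpos_of_forall_le_mul {a b : ℝ} (h : ∀ t ∈ Ioc (0 : ℝ) 1, a ≤ t * b) : a ≤ 0 := by
  have hlim : Tendsto (fun t : ℝ => t * b) (𝓝[>] 0) (𝓝 0) := by
    simpa using ((continuous_mul_const b).tendsto 0).mono_left nhdsWithin_le_nhds
  refine ge_of_tendsto hlim ?_
  filter_upwards [Ioc_mem_nhdsGT zero_lt_one] using h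

variable {E : Type*} [NormedAddCommGroup E] [InnerProductSpace ℝ E]

theorem ConvexOn.inner_sub_le_of_isMinOn_add_sq_norm {s : Set E} {g : E → ℝ}
    (hg : ConvexOn ℝ s g) {c : ℝ} (hc : 0 < c) {z m w : E}
    (hm : IsMinOn (fun w => g w + ‖w - z‖ ^ 2 / (2 * c)) s m) (hms : m ∈ s) (hws : w ∈ s) :
    ⟪z - m, w - m⟫ ≤ c * (g w - g m) := by
  -- compare `m` with `m + t • (w - m)` and let `t → 0⁺`
  rw [← sub_nonpos]
  refine nonpos_of_forall_le_mul (b := ‖w - m‖ ^ 2 / 2) fun t ⟨ht0, ht1⟩ => ?_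
  have hpt : (1 - t) • m + t • w = m + t • (w - m) := by module
  have hmem : m + t • (w - m) ∈ s :=
    hpt ▸ hg.1 hms hws (sub_nonneg.2 ht1) ht0.le (sub_add_cancel 1 t)
  have hconv : g (m + t • (w - m)) ≤ (1 - t) * g m + t * g w := by
    simpa only [hpt, smul_eq_mul] using hg.2 hms hws (sub_nonneg.2 ht1) ht0.le (sub_add_cancel 1 t)
  have hnorm : ‖m + t • (w - m) - z‖ ^ 2 =
      ‖m - z‖ ^ 2 + 2 * t * ⟪m - z, w - m⟫ + t ^ 2 * ‖w - m‖ ^ 2 := by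
    rw [add_sub_right_comm, norm_add_sq_real, real_inner_smul_right, norm_smul, mul_pow,
      Real.norm_eq_abs, sq_abs]
    ring
  have hmin : g m + ‖m - z‖ ^ 2 / (2 * c) ≤
      g (m + t • (w - m)) + ‖m + t • (w - m) - z‖ ^ 2 / (2 * c) := hm hmem
  rw [hnorm] at hmin
  have hscaled : t * (⟪z - m, w - m⟫ - c * (g w - g m)) ≤ t * (t * (‖w - m‖ ^ 2 / 2)) := by
    rw [← neg_sub m z, inner_neg_left]
    field_simp at hmin
    nlinarith
  exact le_of_mul_le_mul_left hscaled ht0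

theorem HasGradientAt.hasDerivAt_comp_add_smul [CompleteSpace E] {f : E → ℝ} {f' x v : E} {t : ℝ}
    (hf : HasGradientAt f f' (x + t • v)) :
    HasDerivAt (fun t : ℝ => f (x + t • v)) ⟪f', v⟫ t := by
  have hline : HasDerivAt (fun t : ℝ => x + t • v) v t := by
    simpa using ((hasDerivAt_id t).smul_const v).const_add x
  exact hf.hasFDerivAt.comp_hasDerivAt t hline

theorem le_add_inner_add_sq_norm_of_lipschitz_gradient [CompleteSpace E] {L : ℝ} {f : E → ℝ}
    {f' : E → E} (hf : ∀ x, HasGradientAt f (f' x) x) (hlip : ∀ x y, ‖f' x - f' y‖ ≤ L * ‖x - y‖)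
    (x y : E) : f y ≤ f x + ⟪f' x, y - x⟫ + L / 2 * ‖y - x‖ ^ 2 := by
  set v := y - x
  let φ : ℝ → ℝ := fun t => f (x + t • v) - t * ⟪f' x, v⟫ - L / 2 * ‖v‖ ^ 2 * t ^ 2
  have hφ : ∀ t, HasDerivAt φ (⟪f' (x + t • v) - f' x, v⟫ - L * ‖v‖ ^ 2 * t) t := fun t => by
    have hsum := ((HasGradientAt.hasDerivAt_comp_add_smul (x := x) (v := v) (hf _)).sub
      ((hasDerivAt_id t).mul_const ⟪f' x, v⟫)).sub
      ((hasDerivAt_pow 2 t).const_mul (L / 2 * ‖v‖ ^ 2))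
    exact hsum.congr_deriv (by rw [inner_sub_left]; ring)
  have hinner : ∀ t, 0 ≤ t → ⟪f' (x + t • v) - f' x, v⟫ ≤ L * ‖v‖ ^ 2 * t := fun t ht =>
    calc ⟪f' (x + t • v) - f' x, v⟫ ≤ ‖f' (x + t • v) - f' x‖ * ‖v‖ := real_inner_le_norm _ _
      _ ≤ L * ‖t • v‖ * ‖v‖ := by gcongr; simpa using hlip (x + t • v) x
      _ = L * ‖v‖ ^ 2 * t := by rw [norm_smul, Real.norm_of_nonneg ht]; ring
  have hanti : AntitoneOn φ (Icc 0 1) :=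
    antitoneOn_of_hasDerivWithinAt_nonpos (convex_Icc 0 1)
      (fun t _ => (hφ t).continuousAt.continuousWithinAt) (fun t _ => (hφ t).hasDerivWithinAt)
      (fun t ht => sub_nonpos.2 (hinner t (interior_subset ht).1))
  have h01 := hanti (left_mem_Icc.2 zero_le_one) (right_mem_Icc.2 zero_le_one) zero_le_one
  simp only [φ, v, one_smul, zero_smul, add_zero, add_sub_cancel, one_mul, one_pow, zero_mul,
    sub_zero, ne_eq, OfNat.ofNat_ne_zero, not_false_eq_true, zero_pow, mul_zero] at h01
  linarith

theorem sufficient_decrease_general (n : ℕ) (L : ℝ)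
    (f : EuclideanSpace ℝ (Fin n) → ℝ) (f' : EuclideanSpace ℝ (Fin n) → EuclideanSpace ℝ (Fin n))
    (hf : ∀ x, HasGradientAt f (f' x) x)
    (hlip : ∀ x y, ‖f' x - f' y‖ ≤ L * ‖x - y‖)
    (g : EuclideanSpace ℝ (Fin n) → ℝ) (hg : ConvexOn ℝ Set.univ g)
    (s α : ℝ) (hs : 0 < s) (hsα : s ≤ α) (hα : α ≤ 1 / L)
    (x y xp : EuclideanSpace ℝ (Fin n))
    (hy : ∀ w, g y + ‖y - (x - s • f' x)‖ ^ 2 / (2 * s) ≤ g w + ‖w - (x - s • f' x)‖ ^ 2 / (2 * s))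
    (hxp : ∀ w, g xp + ‖xp - (x - α • f' y)‖ ^ 2 / (2 * α) ≤ g w + ‖w - (x - α • f' y)‖ ^ 2 / (2 * α)) :
    (f x + g x) - (f xp + g xp) ≥ (1 / (2 * α)) * ‖x - xp‖ ^ 2 := by
  have hα0 : 0 < α := hs.trans_le hsα
  have hLα : L * α ≤ 1 := by
    have hL : 0 < L := one_div_pos.mp (hα0.trans_le hα)
    rwa [le_div_iff₀ hL, mul_comm] at hα
  have hgy := hg.inner_sub_le_of_isMinOn_add_sq_norm hs (isMinOn_univ_iff.2 hy)
    (mem_univ y) (mem_univ x)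
  have hgxp := hg.inner_sub_le_of_isMinOn_add_sq_norm hα0 (isMinOn_univ_iff.2 hxp)
    (mem_univ xp) (mem_univ y)
  have hfy := le_add_inner_add_sq_norm_of_lipschitz_gradient hf hlip x y
  have hfxp := le_add_inner_add_sq_norm_of_lipschitz_gradient hf hlip y xp
  have e1 : x - s • f' x - y = -((y - x) + s • f' x) := by abel
  have e2 : x - α • f' y - xp = -((y - x) + (xp - y) + α • f' y) := by abel
  rw [e1, ← neg_sub y x] at hgy
  rw [e2, ← neg_sub xp y] at hgxp
  simp only [inner_neg_left, inner_neg_right, neg_neg, inner_add_left, real_inner_smul_left,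
    real_inner_self_eq_norm_sq] at hgy hgxp
  have hgap : ‖y - x‖ ^ 2 ≤ α * (g x - g y - ⟪f' x, y - x⟫) := by
    have h : ‖y - x‖ ^ 2 ≤ s * (g x - g y - ⟪f' x, y - x⟫) := by linarith
    have hD : 0 ≤ g x - g y - ⟪f' x, y - x⟫ :=
      nonneg_of_mul_nonneg_right ((sq_nonneg _).trans h) hs
    exact h.trans (by gcongr)
  have e3 : x - xp = -((y - x) + (xp - y)) := by abel
  rw [ge_iff_le, one_div_mul_eq_div, div_le_iff₀ (by positivity), e3, norm_neg, norm_add_sq_real]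
  linarith [mul_le_mul_of_nonneg_left hfy hα0.le, mul_le_mul_of_nonneg_left hfxp hα0.le,
    mul_le_mul_of_nonneg_right hLα (sq_nonneg ‖y - x‖),
    mul_le_mul_of_nonneg_right hLα (sq_nonneg ‖xp - y‖)]

theorem sufficient_decrease (n : ℕ) (L : ℝ) (hL : 0 < L)
    (f : EuclideanSpace ℝ (Fin n) → ℝ) (f' : EuclideanSpace ℝ (Fin n) → EuclideanSpace ℝ (Fin n))
    (hf : ∀ x, HasGradientAt f (f' x) x)
    (hlip : ∀ x y, ‖f' x - f' y‖ ≤ L * ‖x - y‖)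
    (g : EuclideanSpace ℝ (Fin n) → ℝ) (hg : ConvexOn ℝ Set.univ g)
    (s α : ℝ) (hs : 0 < s) (hsα : s ≤ α) (hα : α ≤ 1 / L) (hsL : s * L < 1)
    (x y xp : EuclideanSpace ℝ (Fin n))
    (hy : ∀ w, g y + ‖y - (x - s • f' x)‖ ^ 2 / (2 * s) ≤ g w + ‖w - (x - s • f' x)‖ ^ 2 / (2 * s))
    (hxp : ∀ w, g xp + ‖xp - (x - α • f' y)‖ ^ 2 / (2 * α) ≤ g w + ‖w - (x - α • f' y)‖ ^ 2 / (2 * α)) :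
    (f x + g x) - (f xp + g xp) ≥ (1 / (2 * α)) * ‖x - xp‖ ^ 2 :=
  sufficient_decrease_general n L f f' hf hlip g hg s α hs hsα hα x y xp hy hxp
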